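/- Let D be an integral domain of characteristic not 2 with fraction field K, let n ≥ 4 be even, and let f(x,y) = f₀xⁿ + ⋯ + f_nyⁿ be a binary form of degree n with coefficients in D, with f₀ ≠ 0 and f(x,1) separable over K. Let m be an odd integer with 1 ≤ m ≤ n−3, let P(x) ∈ D[x] be monic of degree m, and let R(x) ∈ D[x] have degree at most m−1, such that P(x) divides R(x)² − f(x,1) in D[x]. Define the D-submodule I_D := R_f·R(θ) + P(θ)·I_f((n−3−m)/2) of L. Then I_D·I_D ⊆ P(θ)·I_f(n−3). -/

import Mathlib

open Polynomial

noncomputable def fxOne {n : ℕ} {R : Type*} [CommRing R] (f : Fin (n+1) → R) : R[X] :=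
  ∑ i : Fin (n+1), C (f i) * X ^ (n - (i:ℕ))

variable {D : Type*} [CommRing D] [IsDomain D]

/-- The monic polynomial `g(x) = f(x,1)/f₀` over the fraction field `K` of `D`. -/
noncomputable def gPoly {n : ℕ} (f : Fin (n+1) → D) : (FractionRing D)[X] :=
  C ((algebraMap D (FractionRing D) (f 0))⁻¹) * (fxOne f).map (algebraMap D (FractionRing D))

/-- The algebra `L = K[x]/(g(x))`. -/
noncomputable abbrev LD {n : ℕ} (f : Fin (n+1) → D) : Type _ := AdjoinRoot (gPoly f)

/-- `θ`, the image of `x` in `L`. -/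
noncomputable def theta {n : ℕ} (f : Fin (n+1) → D) : LD f := AdjoinRoot.root (gPoly f)

/-- `ζ_k = f₀θ^k + f₁θ^{k-1} + ⋯ + f_{k-1}θ ∈ L`. -/
noncomputable def zeta {n : ℕ} (f : Fin (n+1) → D) (k : ℕ) : LD f :=
  ∑ j ∈ Finset.range k,
    algebraMap D (LD f) (if h : j < n + 1 then f ⟨j, h⟩ else 0) * theta f ^ (k - j)

/-- The `D`-submodule `R_f` of `L`, with basis `{1, ζ₁, …, ζ_{n−1}}`. -/
noncomputable def Rf {n : ℕ} (f : Fin (n+1) → D) : Submodule D (LD f) :=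
  Submodule.span D ({1} ∪ {x : LD f | ∃ k, 1 ≤ k ∧ k ≤ n - 1 ∧ x = zeta f k})

/-- The `D`-submodule `I_f(k)` of `L`, with basis `{1, θ, …, θ^k, ζ_{k+1}, …, ζ_{n−1}}`. -/
noncomputable def If {n : ℕ} (f : Fin (n+1) → D) (k : ℕ) : Submodule D (LD f) :=
  Submodule.span D ({x : LD f | ∃ i ≤ k, x = theta f ^ i} ∪
    {x : LD f | ∃ j, k + 1 ≤ j ∧ j ≤ n - 1 ∧ x = zeta f j})


/-!
Since `f(θ,1) = 0`, the divisibility gives `R(θ)² = P(θ) S(θ)`, so every term of the expanded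
square of `I_D` carries a factor `P(θ)`, and the cofactors lie in products `I_f(a) · I_f(b)` with
`a + b ≤ n - 3` (using `R_f = I_f(0)`, `R(θ) ∈ I_f(m-1)`, `P(θ) ∈ I_f(m)` and
`m + 2 ((n-3-m)/2) = n - 3`).
Such products satisfy `I_f(a) · I_f(b) ⊆ I_f(a + b)`: the recursion `ζ_{k+1} = θ ζ_k + f_k θ` gives
`θ ζ_k = ζ_{k+1} - f_k θ` and `ζ_{i+1} ζ_j = ζ_i ζ_{j+1} + f_i ζ_{j+1} - f_j ζ_{i+1}`, and every
`ζ_k` lies in every `I_f(a)` because `ζ_n = -f_n` and `ζ_k = 0` for `k > n`.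
It remains that `S(θ) ∈ I_f(n-3)`: for `m ≥ 3` by degree, and for `m = 1`, where `P = x - t`,
because `-S` is the quotient of `f(x,1) - f(t,1)` by `x - t`.
-/

namespace BinaryForm

open Submodule

section Horner

variable {A : Type*} [CommRing A] {n : ℕ} (f : Fin (n+1) → A)

def formCoeff (j : ℕ) : A := if h : j < n + 1 then f ⟨j, h⟩ else 0

noncomputable def hornerPoly (k : ℕ) : A[X] :=
  ∑ j ∈ Finset.range (k + 1), C (formCoeff f j) * X ^ (k - j)

lemma fxOne_eq_hornerPoly : fxOne f = hornerPoly f n := by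
  rw [fxOne, hornerPoly, ← Fin.sum_univ_eq_sum_range]
  refine Finset.sum_congr rfl fun i _ => ?_
  simp [formCoeff, Fin.is_le]

lemma hornerPoly_succ (k : ℕ) :
    hornerPoly f (k + 1) = X * hornerPoly f k + C (formCoeff f (k + 1)) := by
  rw [hornerPoly, Finset.sum_range_succ, Nat.sub_self, pow_zero, mul_one, hornerPoly,
    Finset.mul_sum]
  congr 1
  refine Finset.sum_congr rfl fun j hj => ?_
  rw [Nat.sub_add_comm (Finset.mem_range_succ_iff.mp hj), pow_succ]
  ring

lemma natDegree_fxOne_le : (fxOne f).natDegree ≤ n :=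
  natDegree_sum_le_of_forall_le _ _ fun _ _ => (natDegree_C_mul_X_pow_le _ _).trans (by omega)

lemma natDegree_le_of_sq_sub_eq_mul {m : ℕ} (hm3 : 3 ≤ m) (hm : m ≤ n - 3) {P R S : A[X]}
    (hP : P.Monic) (hPdeg : P.natDegree = m) (hRdeg : R.natDegree ≤ m - 1)
    (hS : R ^ 2 - fxOne f = P * S) : S.natDegree ≤ n - 3 := by
  rcases eq_or_ne S 0 with rfl | hS0
  · simp
  have hprod : (R ^ 2 - fxOne f).natDegree = m + S.natDegree := by
    rw [hS, hP.natDegree_mul' hS0, hPdeg]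
  have hdiff : (R ^ 2 - fxOne f).natDegree ≤ max (2 * (m - 1)) n :=
    (natDegree_sub_le _ _).trans (max_le_max
      (natDegree_pow_le.trans (Nat.mul_le_mul_left 2 hRdeg)) (natDegree_fxOne_le f))
  rcases le_max_iff.mp hdiff with h | h <;> omega

/-- The quotient of `hornerPoly f k - (hornerPoly f k)(t)` by `X - t`, in the form
`∑_{j<k} t^(k-1-j) hornerPoly f j`, whose value at `θ` is visibly a combination of `1` and the `ζ_j`. -/
noncomputable def hornerQuot (t : A) : ℕ → A[X]
  | 0 => 0
  | k + 1 => C t * hornerQuot t k + hornerPoly f k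

lemma X_sub_C_mul_hornerQuot (t : A) (k : ℕ) :
    (X - C t) * hornerQuot f t k = hornerPoly f k - C ((hornerPoly f k).eval t) := by
  induction k with
  | zero => simp [hornerQuot, hornerPoly]
  | succ k ih =>
    rw [hornerQuot, hornerPoly_succ, eval_add, eval_mul, eval_X, eval_C, C_add, C_mul]
    linear_combination C t * ih

end Horner

variable {n : ℕ} (f : Fin (n+1) → D)

lemma aeval_hornerPoly (k : ℕ) :
    aeval (theta f) (hornerPoly f k) = zeta f k + algebraMap D (LD f) (formCoeff f k) := by
  simp [hornerPoly, zeta, Finset.sum_range_succ, formCoeff]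

lemma aeval_fxOne (hf0 : f 0 ≠ 0) : aeval (theta f) (fxOne f) = 0 := by
  have hf0' : algebraMap D (FractionRing D) (f 0) ≠ 0 := by
    simpa [IsFractionRing.to_map_eq_zero_iff] using hf0
  have h : (fxOne f).map (algebraMap D (FractionRing D))
      = C (algebraMap D (FractionRing D) (f 0)) * gPoly f := by
    rw [gPoly, ← mul_assoc, ← C_mul, mul_inv_cancel₀ hf0', C_1, one_mul]
  rw [← aeval_map_algebraMap (FractionRing D), h, map_mul, theta, AdjoinRoot.aeval_eq (gPoly f),
    AdjoinRoot.mk_self, mul_zero]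

lemma zeta_zero : zeta f 0 = 0 := by simp [zeta]

lemma zeta_succ (k : ℕ) : zeta f (k + 1) = theta f * zeta f k + formCoeff f k • theta f := by
  have h := congrArg (aeval (theta f)) (hornerPoly_succ f k)
  simp only [map_add, map_mul, aeval_X, aeval_C, aeval_hornerPoly] at h
  rw [Algebra.smul_def]
  linear_combination h

lemma zeta_of_le (hf0 : f 0 ≠ 0) {N : ℕ} (hN : n ≤ N) :
    zeta f N = -algebraMap D (LD f) (formCoeff f N) := by
  induction N, hN using Nat.le_induction with
  | base =>
    have h := aeval_hornerPoly f n
    rw [← fxOne_eq_hornerPoly, aeval_fxOne f hf0] at h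
    linear_combination -h
  | succ N hN ih =>
    have hzero : formCoeff f (N + 1) = 0 := dif_neg (by omega)
    rw [zeta_succ, ih, hzero, map_zero, neg_zero, Algebra.smul_def]
    ring

lemma zeta_succ_mul_zeta (i j : ℕ) :
    zeta f (i + 1) * zeta f j
      = zeta f i * zeta f (j + 1) + formCoeff f i • zeta f (j + 1)
        - formCoeff f j • zeta f (i + 1) := by
  have hi := zeta_succ f i
  have hj := zeta_succ f j
  simp only [Algebra.smul_def] at hi hj ⊢
  linear_combination (zeta f j + algebraMap D (LD f) (formCoeff f j)) * hi
    - (zeta f i + algebraMap D (LD f) (formCoeff f i)) * hj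

lemma theta_pow_mem_If {i k : ℕ} (hi : i ≤ k) : theta f ^ i ∈ If f k :=
  subset_span (Or.inl ⟨i, hi, rfl⟩)

lemma one_mem_If (k : ℕ) : (1 : LD f) ∈ If f k := by
  simpa using theta_pow_mem_If f (Nat.zero_le k)

lemma aeval_mem_If {k : ℕ} {W : D[X]} (hW : W.natDegree ≤ k) : aeval (theta f) W ∈ If f k := by
  rw [aeval_eq_sum_range]
  refine sum_mem fun i hi => smul_mem _ _ (theta_pow_mem_If f ?_)
  have := Finset.mem_range.mp hi
  omega

lemma zeta_mem_If (hf0 : f 0 ≠ 0) (k N : ℕ) : zeta f N ∈ If f k := by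
  rcases le_or_gt N k with hNk | hkN
  · refine sum_mem fun j hj => ?_
    rw [← Algebra.smul_def]
    exact smul_mem _ _ (theta_pow_mem_If f (by omega))
  rcases lt_or_ge N n with hNn | hnN
  · exact subset_span (Or.inr ⟨N, hkN, by omega, rfl⟩)
  · rw [zeta_of_le f hf0 hnN, ← mul_one (algebraMap D (LD f) _), ← Algebra.smul_def]
    exact neg_mem (smul_mem _ _ (one_mem_If f k))

lemma theta_pow_mul_zeta_mem_If (hf0 : f 0 ≠ 0) {i k : ℕ} (hi : i ≤ k) (N : ℕ) :
    theta f ^ i * zeta f N ∈ If f k := by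
  induction i generalizing N with
  | zero => simpa using zeta_mem_If f hf0 k N
  | succ i ih =>
    have h : theta f ^ (i + 1) * zeta f N
        = theta f ^ i * zeta f (N + 1) - formCoeff f N • theta f ^ (i + 1) := by
      simp only [zeta_succ, Algebra.smul_def]
      ring
    rw [h]
    exact sub_mem (ih (by omega) _) (smul_mem _ _ (theta_pow_mem_If f hi))

lemma zeta_mul_zeta_mem_If (hf0 : f 0 ≠ 0) (k i j : ℕ) : zeta f i * zeta f j ∈ If f k := by
  induction i generalizing j with
  | zero => simp [zeta_zero]
  | succ i ih =>
    rw [zeta_succ_mul_zeta]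
    exact sub_mem (add_mem (ih _) (smul_mem _ _ (zeta_mem_If f hf0 k _)))
      (smul_mem _ _ (zeta_mem_If f hf0 k _))

lemma If_mono (hf0 : f 0 ≠ 0) {k k' : ℕ} (h : k ≤ k') : If f k ≤ If f k' := by
  refine span_le.2 ?_
  rintro _ (⟨i, hi, rfl⟩ | ⟨j, -, -, rfl⟩)
  · exact theta_pow_mem_If f (hi.trans h)
  · exact zeta_mem_If f hf0 k' j

lemma If_mul_If (hf0 : f 0 ≠ 0) (a b : ℕ) : If f a * If f b ≤ If f (a + b) := by
  rw [If, If, span_mul_span, span_le]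
  rintro _ ⟨_, ⟨i, hi, rfl⟩ | ⟨i, -, -, rfl⟩, _, ⟨j, hj, rfl⟩ | ⟨j, -, -, rfl⟩, rfl⟩ <;> dsimp only
  · rw [← pow_add]
    exact theta_pow_mem_If f (by omega)
  · exact theta_pow_mul_zeta_mem_If f hf0 (by omega) j
  · rw [mul_comm]
    exact theta_pow_mul_zeta_mem_If f hf0 (by omega) i
  · exact zeta_mul_zeta_mem_If f hf0 _ i j

lemma Rf_eq_If_zero : Rf f = If f 0 := by
  rw [Rf, If]
  congr 2
  ext x
  simp

lemma aeval_hornerQuot_mem_If (hf0 : f 0 ≠ 0) (t : D) (k N : ℕ) :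
    aeval (theta f) (hornerQuot f t N) ∈ If f k := by
  induction N with
  | zero => simp [hornerQuot]
  | succ N ih =>
    rw [hornerQuot, map_add, map_mul, aeval_C, ← Algebra.smul_def, aeval_hornerPoly,
      ← mul_one (algebraMap D (LD f) _), ← Algebra.smul_def]
    exact add_mem (smul_mem _ _ ih)
      (add_mem (zeta_mem_If f hf0 k N) (smul_mem _ _ (one_mem_If f k)))

lemma aeval_mem_If_of_C_sub_eq_mul (hf0 : f 0 ≠ 0) (k : ℕ) {r t : D} {S : D[X]}
    (hS : C r - fxOne f = (X - C t) * S) : aeval (theta f) S ∈ If f k := by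
  have hr : r = (fxOne f).eval t := by
    simpa [sub_eq_zero] using congrArg (eval t) hS
  have hQ : -S = hornerQuot f t n := by
    refine mul_left_cancel₀ (X_sub_C_ne_zero t) ?_
    rw [X_sub_C_mul_hornerQuot, ← fxOne_eq_hornerPoly, ← hr, mul_neg, ← hS]
    ring
  simpa [← hQ] using neg_mem (aeval_hornerQuot_mem_If f hf0 t k n)

lemma aeval_mem_If_of_sq_sub_eq_mul (hf0 : f 0 ≠ 0) {m : ℕ} (hmodd : Odd m) (hm : m ≤ n - 3)
    {P R S : D[X]} (hP : P.Monic) (hPdeg : P.natDegree = m) (hRdeg : R.natDegree ≤ m - 1)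
    (hS : R ^ 2 - fxOne f = P * S) : aeval (theta f) S ∈ If f (n - 3) := by
  obtain rfl | hm3 : m = 1 ∨ 3 ≤ m := by
    obtain ⟨j, rfl⟩ := hmodd
    omega
  · have hR : R = C (R.coeff 0) := eq_C_of_natDegree_le_zero hRdeg
    have hP1 : P = X - C (-P.coeff 0) := by
      rw [C_neg, sub_neg_eq_add]
      exact hP.eq_X_add_C hPdeg
    rw [hR, hP1, ← C_pow] at hS
    exact aeval_mem_If_of_C_sub_eq_mul f hf0 _ hS
  · exact aeval_mem_If f (natDegree_le_of_sq_sub_eq_mul f hm3 hm hP hPdeg hRdeg hS)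

lemma mul_le_If (hf0 : f 0 ≠ 0) {M N : Submodule D (LD f)} {a b k : ℕ} (hM : M ≤ If f a)
    (hN : N ≤ If f b) (hk : a + b ≤ k) : M * N ≤ If f k :=
  (mul_le_mul' hM hN).trans ((If_mul_If f hf0 a b).trans (If_mono f hf0 hk))

lemma mul_self_le_span_mul_If (hf0 : f 0 ≠ 0) {m c : ℕ} (hc : m + 2 * c = n - 3) {p ρ s : LD f}
    (hρ : ρ * ρ = p * s) (hp : p ∈ If f m) (hρI : ρ ∈ If f (m - 1)) (hs : s ∈ If f (n - 3)) :
    (Rf f * span D {ρ} + span D {p} * If f c) * (Rf f * span D {ρ} + span D {p} * If f c)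
      ≤ span D {p} * If f (n - 3) := by
  have hsq : span D {ρ} * span D {ρ} = span D {p} * span D {s} := by
    rw [span_mul_span, span_mul_span, Set.singleton_mul_singleton, Set.singleton_mul_singleton, hρ]
  have hRf : Rf f ≤ If f 0 := (Rf_eq_If_zero f).le
  have hpI := (span_singleton_le_iff_mem p _).2 hp
  have hcross : Rf f * span D {ρ} * If f c ≤ If f (n - 3) :=
    mul_le_If f hf0 (mul_le_If f hf0 hRf ((span_singleton_le_iff_mem ρ _).2 hρI) le_rfl) le_rfl
      (by omega)
  calc (Rf f * span D {ρ} + span D {p} * If f c) * (Rf f * span D {ρ} + span D {p} * If f c)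
      = Rf f * Rf f * (span D {ρ} * span D {ρ}) + span D {p} * (Rf f * span D {ρ} * If f c
          + Rf f * span D {ρ} * If f c + span D {p} * If f c * If f c) := by ring
    _ = span D {p} * (Rf f * Rf f * span D {s} + Rf f * span D {ρ} * If f c
          + Rf f * span D {ρ} * If f c + span D {p} * If f c * If f c) := by
        rw [hsq]
        ring
    _ ≤ span D {p} * If f (n - 3) := mul_le_mul_right (sup_le (sup_le (sup_le
        (mul_le_If f hf0 (mul_le_If f hf0 hRf hRf le_rfl) ((span_singleton_le_iff_mem s _).2 hs)
          (by omega)) hcross) hcross)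
        (mul_le_If f hf0 (mul_le_If f hf0 hpI le_rfl le_rfl) le_rfl (by omega))) _

end BinaryForm

open BinaryForm Submodule in
theorem stmt14_general (n : ℕ) (hneven : Even n)
    (f : Fin (n+1) → D) (hf0 : f 0 ≠ 0)
    (m : ℕ) (hmodd : Odd m) (hm2 : m ≤ n - 3)
    (P R : D[X]) (hP : P.Monic) (hPdeg : P.natDegree = m) (hRdeg : R.natDegree ≤ m - 1)
    (hdvd : P ∣ (R ^ 2 - fxOne f)) :
    letI ID : Submodule D (LD f) :=
      Rf f * Submodule.span D {Polynomial.aeval (theta f) R} +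
        Submodule.map (LinearMap.mulLeft D (Polynomial.aeval (theta f) P))
          (If f ((n - 3 - m) / 2))
    ID * ID ≤
      Submodule.map (LinearMap.mulLeft D (Polynomial.aeval (theta f) P)) (If f (n - 3)) := by
  obtain ⟨S, hS⟩ := hdvd
  have hc : m + 2 * ((n - 3 - m) / 2) = n - 3 := by
    obtain ⟨a, rfl⟩ := hneven
    obtain ⟨b, rfl⟩ := hmodd
    omega
  have hρ : aeval (theta f) R * aeval (theta f) R = aeval (theta f) P * aeval (theta f) S := by
    have h := congrArg (aeval (theta f)) hS
    rw [map_sub, map_mul, map_pow, aeval_fxOne f hf0] at h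
    linear_combination h
  have hmap (J : Submodule D (LD f)) :
      map (LinearMap.mulLeft D (aeval (theta f) P)) J = span D {aeval (theta f) P} * J := by
    ext
    simp [mem_span_singleton_mul]
  rw [hmap, hmap]
  exact mul_self_le_span_mul_If f hf0 hc hρ (aeval_mem_If f hPdeg.le) (aeval_mem_If f hRdeg)
    (aeval_mem_If_of_sq_sub_eq_mul f hf0 hmodd hm2 hP hPdeg hRdeg hS)

theorem stmt14 (hchar : ringChar D ≠ 2) (n : ℕ) (hn : 4 ≤ n) (hneven : Even n)
    (f : Fin (n+1) → D) (hf0 : f 0 ≠ 0)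
    (hsep : ((fxOne f).map (algebraMap D (FractionRing D))).Separable)
    (m : ℕ) (hmodd : Odd m) (hm1 : 1 ≤ m) (hm2 : m ≤ n - 3)
    (P R : D[X]) (hP : P.Monic) (hPdeg : P.natDegree = m) (hRdeg : R.natDegree ≤ m - 1)
    (hdvd : P ∣ (R ^ 2 - fxOne f)) :
    letI ID : Submodule D (LD f) :=
      Rf f * Submodule.span D {Polynomial.aeval (theta f) R} +
        Submodule.map (LinearMap.mulLeft D (Polynomial.aeval (theta f) P))
          (If f ((n - 3 - m) / 2))
    ID * ID ≤
      Submodule.map (LinearMap.mulLeft D (Polynomial.aeval (theta f) P)) (If f (n - 3)) :=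
  stmt14_general n hneven f hf0 m hmodd hm2 P R hP hPdeg hRdeg hdvd
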